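/- arXiv:2602.13663 — 3 statements merged into one kernel-verified Lean document; each statement's English description precedes it below -/
import Mathlib

section
/- For any directed graph (V, E), the set D_∞ of vertices from which no infinite E-path starts (i.e., there is no sequence w_1, w_2, ... with v E w_1 and w_k E w_{k+1} for all k) is not equal to Out(v) for any vertex v ∈ V. -/
def OutSet {V : Type*} (E : V → V → Prop) (v : V) : Set V := {w | E v w}

def DiagSet {V : Type*} (E : V → V → Prop) : Set V := {u | ¬ E u u}

/-- `v` lies on an E-cycle `v E w₁ E ⋯ E wₙ E v` (indices 1..n). -/
def HasCycle {V : Type*} (E : V → V → Prop) (v : V) (n : ℕ) : Prop :=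
  ∃ w : ℕ → V, E v (w 1) ∧ (∀ i, 1 ≤ i → i < n → E (w i) (w (i+1))) ∧ E (w n) v

def Dn {V : Type*} (E : V → V → Prop) (n : ℕ) : Set V := {v | ¬ HasCycle E v n}

def Dinf {V : Type*} (E : V → V → Prop) : Set V :=
  {v | ¬ ∃ w : ℕ → V, E v (w 0) ∧ ∀ k, E (w k) (w (k+1))}

def DS {V : Type*} (E : V → V → Prop) (S : Set ℕ) : Set V :=
  {v | (∀ n ∈ S, 0 < n → ¬ HasCycle E v n) ∧ (0 ∈ S → ¬ E v v)}

/- A vertex lies in `Dinf E` as soon as all its successors do. If `Dinf E = OutSet E v`, this puts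
`v` itself in `Dinf E = OutSet E v`, i.e. `E v v`; but then the constant path at `v` is infinite. -/

theorem notMem_Dinf_of_rel_self {V : Type*} {E : V → V → Prop} {v : V} (h : E v v) :
    v ∉ Dinf E :=
  fun hv => hv ⟨fun _ => v, h, fun _ => h⟩

theorem mem_Dinf_of_outSet_subset {V : Type*} {E : V → V → Prop} {u : V}
    (h : OutSet E u ⊆ Dinf E) : u ∈ Dinf E :=
  fun ⟨w, hw₀, hw⟩ => h hw₀ ⟨fun k => w (k + 1), hw 0, fun k => hw (k + 1)⟩

theorem stmt3 {V : Type*} (E : V → V → Prop) :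
    ∀ v : V, Dinf E ≠ OutSet E v := by
  intro v h
  have hv : v ∈ Dinf E := mem_Dinf_of_outSet_subset h.ge
  have hloop : E v v := by rwa [h] at hv
  exact notMem_Dinf_of_rel_self hloop hv
end

section
/- Let S be a nonempty set of natural numbers. For any directed graph (V, E), the set D_S of vertices v such that for no n ∈ S with n > 0 do there exist w_1, ..., w_n with v E w_1 E ⋯ E w_n E v, and additionally ¬ v E v if 0 ∈ S, is not equal to Out(v) for any vertex v ∈ V. -/
theorem stmt4 {V : Type*} (E : V → V → Prop) (S : Set ℕ) (hS : S.Nonempty) :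
    ∀ v : V, DS E S ≠ OutSet E v := by
  intro v heq
  obtain ⟨m, hm⟩ := hS
  by_cases hv : v ∈ DS E S
  · -- then E v v, contradiction with membership in DS
    have hEvv : E v v := by
      have : v ∈ OutSet E v := heq ▸ hv
      exact this
    rcases Nat.eq_zero_or_pos m with h0 | hpos
    · exact hv.2 (h0 ▸ hm) hEvv
    · exact hv.1 m hm hpos ⟨fun _ => v, hEvv, fun _ _ _ => hEvv, hEvv⟩
  · have hnot : v ∉ OutSet E v := heq ▸ hv
    have hnE : ¬ E v v := hnot
    -- so DS fails only in its first conjunct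
    have hA : ¬ ∀ n ∈ S, 0 < n → ¬ HasCycle E v n :=
      fun hA => hv ⟨hA, fun _ => hnE⟩
    push_neg at hA
    obtain ⟨n, hnS, hn, w, hvw, hchain, hwv⟩ := hA
    -- w 1 ∈ Out v = DS, but w 1 has a cycle of length n
    have hw1 : w 1 ∈ DS E S := by rw [heq]; exact hvw
    refine hw1.1 n hnS hn ⟨fun i => if i < n then w (i+1) else v, ?_, ?_, ?_⟩
    · by_cases h1 : 1 < n
      · simp only [h1, if_pos]
        exact hchain 1 le_rfl h1
      · have : n = 1 := le_antisymm (not_lt.mp h1) hn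
        simp [this] at hwv ⊢
        exact hwv
    · intro i hi hilt
      by_cases h2 : i + 1 < n
      · simp only [hilt, h2, if_pos]
        exact hchain (i+1) (by omega) h2
      · have hin : i + 1 = n := by omega
        simp only []
        rw [if_pos hilt, hin, if_neg (lt_irrefl n)]
        exact hwv
    · simp only [if_neg (lt_irrefl n)]
      exact hvw
end

section
/- For any directed graph (V, E), any positive integer n, and any vertex v ∈ V: if D_n ⊆ Out(v), then Out(v) ⊄ D_n (i.e., Out(v) is not a subset of D_n); consequently D_n ≠ Out(v). -/
theorem stmt5 {V : Type*} (E : V → V → Prop) (n : ℕ) (hn : 0 < n) (v : V) :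
    (Dn E n ⊆ OutSet E v → ¬ OutSet E v ⊆ Dn E n) ∧ Dn E n ≠ OutSet E v := by
  have key : ¬ (Dn E n ⊆ OutSet E v ∧ OutSet E v ⊆ Dn E n) := by
    rintro ⟨h1, h2⟩
    by_cases hvv : E v v
    · have hvout : v ∈ OutSet E v := hvv
      have hvd : v ∈ Dn E n := h2 hvout
      exact hvd ⟨fun _ => v, hvv, fun _ _ _ => hvv, hvv⟩
    · have hvnd : v ∉ Dn E n := fun h => hvv (h1 h)
      have hc : HasCycle E v n := not_not.mp hvnd
      obtain ⟨w, hw1, hwmid, hwn⟩ := hc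
      have hw1out : w 1 ∈ OutSet E v := hw1
      have hw1d : w 1 ∈ Dn E n := h2 hw1out
      apply hw1d
      refine ⟨fun i => if i < n then w (i+1) else v, ?_, ?_, ?_⟩
      · by_cases h1n : 1 < n
        · simpa [h1n] using hwmid 1 le_rfl h1n
        · have : n = 1 := le_antisymm (not_lt.mp h1n) hn
          simpa [this] using hwn
      · intro i hi hin
        by_cases hin' : i + 1 < n
        · simp only [if_pos (lt_trans (Nat.lt_succ_self i) hin'), if_pos hin']
          exact hwmid (i+1) (le_trans hi (Nat.le_succ i)) hin'
        · have : i + 1 = n := le_antisymm hin (not_lt.mp hin')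
          simp only [if_pos hin, if_neg (not_lt.mpr (le_of_eq this.symm))]
          rw [this]
          exact hwn
      · simp [hw1]
  refine ⟨fun h1 h2 => key ⟨h1, h2⟩, fun heq => key ⟨heq.le, heq.ge⟩⟩
end
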